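/- arXiv:1809.02799 — 2 statements merged into one kernel-verified Lean document; each statement's English description precedes it below -/
import Mathlib

section
/- Let α ≥ 5 be an integer and let G be a finite simple graph with maximum degree Δ such that every subgraph G' of G satisfies at least one of: (i) G' has a vertex of degree at most 1; (ii) G' contains an edge uv with d_{G'}(u) + d_{G'}(v) ≤ α; (iii) G' contains a 2-alternating cycle. Then the edge set of G can be partitioned into three pairwise disjoint sets inducing spanning subgraphs F₁, F₂, H such that F₁ and F₂ are forests with maximum degree at most max{2, ⌈(Δ − α + 6)/2⌉} and H has maximum degree at most α − 5. -/
/-!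
Induct on the edges of a subgraph `K ≤ G`, bounding the forest degree of each vertex by
`max 2 ⌈(d - α + 6) / 2⌉` with `d` its degree in `K` rather than `Δ`. If some edge `uv` has
`d(u) + d(v) ≤ α` or an end of degree one, decompose `K - uv`: counting the edges at `u` and `v`
shows that `F₁`, `F₂` or `H` can take `uv`. Otherwise `K` has a 2-alternating cycle. Decompose `K`
minus the cycle and give alternate cycle edges to `F₁` and `F₂`. The even vertices of the cycle
become leaves, so no cycle is created. An odd vertex loses two edges of `K` and gains one in each
forest, and its degree is at least `α - 1`, where the bound grows by one when `d` grows by two.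
-/

/-- A 2-alternating cycle in a subgraph `G'` of `G`: a cycle `v₀v₁⋯v₂ₙ₋₁v₀` of even
length `2n ≥ 4` (vertices pairwise distinct) all of whose even-indexed vertices have
degree 2 in `G'`. -/
def SubgraphHasTwoAlternatingCycle {V : Type*} {G : SimpleGraph V} (G' : G.Subgraph) : Prop :=
  ∃ (n : ℕ) (f : ℕ → V), 2 ≤ n ∧
    (∀ i < 2 * n, ∀ j < 2 * n, f i = f j → i = j) ∧
    (∀ i < 2 * n, G'.Adj (f i) (f ((i + 1) % (2 * n)))) ∧
    (∀ i < 2 * n, i % 2 = 0 → (G'.neighborSet (f i)).ncard = 2)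

/-- `F₁`, `F₂`, `H` form an edge partition of `G` into three spanning subgraphs:
their edge sets are pairwise disjoint and their union is the edge set of `G`. -/
def EdgePartition3 {V : Type*} (G F₁ F₂ H : SimpleGraph V) : Prop :=
  F₁.edgeSet ∪ F₂.edgeSet ∪ H.edgeSet = G.edgeSet ∧
  Disjoint F₁.edgeSet F₂.edgeSet ∧
  Disjoint F₁.edgeSet H.edgeSet ∧
  Disjoint F₂.edgeSet H.edgeSet

open SimpleGraph

namespace SimpleGraph

variable {V : Type*} {G F M K : SimpleGraph V} {u v x : V}

lemma Reachable.one_le_ncard_neighborSet [Finite V] (h : G.Reachable u v) (huv : u ≠ v) :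
    1 ≤ (G.neighborSet u).ncard := by
  obtain ⟨p⟩ := h
  cases p with
  | nil => exact absurd rfl huv
  | cons hadj _ => exact (Set.ncard_pos).mpr ⟨_, hadj⟩

lemma ncard_neighborSet_le_of_le [Finite V] (h : G ≤ K) (x : V) :
    (G.neighborSet x).ncard ≤ (K.neighborSet x).ncard :=
  Set.ncard_le_ncard (fun _ hy => h hy)

lemma ncard_neighborSet_sdiff [Finite V] (h : M ≤ K) (x : V) :
    ((K \ M).neighborSet x).ncard = (K.neighborSet x).ncard - (M.neighborSet x).ncard :=
  Set.ncard_sdiff (fun _ hy => h hy)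

lemma ncard_neighborSet_sdiff_edge_add_one [Finite V] (huv : K.Adj u v) :
    ((K \ edge u v).neighborSet u).ncard + 1 = (K.neighborSet u).ncard := by
  have hedge : (edge u v).neighborSet u = {v} := by
    ext w; simp only [mem_neighborSet, edge_adj, Set.mem_singleton_iff]; grind [huv.ne]
  have hpos : 0 < (K.neighborSet u).ncard := (Set.ncard_pos).mpr ⟨v, huv⟩
  rw [ncard_neighborSet_sdiff (K.edge_le_iff.mpr (.inr huv)), hedge, Set.ncard_singleton]
  omega

lemma ncard_neighborSet_sup_le [Finite V] (x : V) :
    ((F ⊔ M).neighborSet x).ncard ≤ (F.neighborSet x).ncard + (M.neighborSet x).ncard :=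
  Set.ncard_union_le _ _

lemma neighborSet_sup_edge_subset : (F ⊔ edge u v).neighborSet u ⊆ insert v (F.neighborSet u) := by
  intro y hy
  simp only [neighborSet_sup, Set.mem_union, mem_neighborSet, edge_adj] at hy
  simp only [Set.mem_insert_iff, mem_neighborSet]
  grind

lemma ncard_neighborSet_sup_edge_le [Finite V] {B : V → ℕ}
    (hF : ∀ x, (F.neighborSet x).ncard ≤ B x) (hu : (F.neighborSet u).ncard < B u)
    (hv : (F.neighborSet v).ncard < B v) (x : V) :
    ((F ⊔ edge u v).neighborSet x).ncard ≤ B x := by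
  by_cases hxu : x = u
  · subst hxu
    exact (Set.ncard_le_ncard neighborSet_sup_edge_subset).trans
      ((Set.ncard_insert_le _ _).trans hu)
  by_cases hxv : x = v
  · subst hxv
    rw [edge_comm]
    exact (Set.ncard_le_ncard neighborSet_sup_edge_subset).trans
      ((Set.ncard_insert_le _ _).trans hv)
  have : (F ⊔ edge u v).neighborSet x = F.neighborSet x := by
    ext y; simp only [neighborSet_sup, Set.mem_union, mem_neighborSet, edge_adj]; grind
  exact this ▸ hF x

lemma IsBridge.of_neighborSet_subsingleton (hx : (G.neighborSet x).Subsingleton)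
    (hadj : G.Adj x v) : G.IsBridge s(x, v) := by
  rw [isBridge_iff]
  rintro ⟨p⟩
  cases p with
  | nil => exact hadj.ne rfl
  | cons hw _ =>
    rw [deleteEdges_adj] at hw
    exact hw.2 (by rw [hx hw.1 hadj]; rfl)

/-- Edges at vertices of degree at most one lie on no cycle. -/
lemma IsAcyclic.sup_of_forall_adj_subsingleton (hF : F.IsAcyclic)
    (hM : ∀ ⦃x y⦄, M.Adj x y →
      ((F ⊔ M).neighborSet x).Subsingleton ∨ ((F ⊔ M).neighborSet y).Subsingleton) :
    (F ⊔ M).IsAcyclic := by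
  intro u c hc
  by_cases hcF : ∀ e ∈ c.edges, e ∈ F.edgeSet
  · exact hF (c.transfer F hcF) (hc.transfer hcF)
  push Not at hcF
  obtain ⟨e, hec, heF⟩ := hcF
  induction e using Sym2.ind with
  | _ x y =>
  have hxy : (F ⊔ M).Adj x y := c.adj_of_mem_edges hec
  have hMxy : M.Adj x y := hxy.resolve_left heF
  rcases hM hMxy with hx | hy
  · exact (IsBridge.of_neighborSet_subsingleton hx hxy).notMem_edges_of_isCycle hc hec
  · refine (IsBridge.of_neighborSet_subsingleton hy hxy.symm).notMem_edges_of_isCycle hc ?_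
    rwa [Sym2.eq_swap]

end SimpleGraph

namespace EdgePartition3

variable {V : Type*} {K F₁ F₂ H M M₁ M₂ M₃ : SimpleGraph V}

lemma swap (h : EdgePartition3 K F₁ F₂ H) : EdgePartition3 K F₂ F₁ H := by
  obtain ⟨hU, h12, h1H, h2H⟩ := h
  exact ⟨by rw [← hU, Set.union_comm F₂.edgeSet], h12.symm, h2H, h1H⟩

lemma le₁ (h : EdgePartition3 K F₁ F₂ H) : F₁ ≤ K := by
  rw [← edgeSet_subset_edgeSet, ← h.1]
  exact Set.subset_union_left.trans Set.subset_union_left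

lemma le₂ (h : EdgePartition3 K F₁ F₂ H) : F₂ ≤ K := h.swap.le₁

lemma ncard_neighborSet [Finite V] (h : EdgePartition3 K F₁ F₂ H) (x : V) :
    (F₁.neighborSet x).ncard + (F₂.neighborSet x).ncard + (H.neighborSet x).ncard =
      (K.neighborSet x).ncard := by
  obtain ⟨hU, h12, h1H, h2H⟩ := h
  rw [disjoint_edgeSet] at h12 h1H h2H
  have hK : K = F₁ ⊔ F₂ ⊔ H := by rw [← edgeSet_inj, edgeSet_sup, edgeSet_sup, hU]
  rw [hK, neighborSet_sup, Set.ncard_union_eq (disjoint_neighborSet.mpr (h1H.sup_left h2H) x),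
    neighborSet_sup, Set.ncard_union_eq (disjoint_neighborSet.mpr h12 x)]

lemma sup (h : EdgePartition3 K F₁ F₂ H) (hM : EdgePartition3 M M₁ M₂ M₃)
    (hKM : Disjoint K M) : EdgePartition3 (K ⊔ M) (F₁ ⊔ M₁) (F₂ ⊔ M₂) (H ⊔ M₃) := by
  obtain ⟨hU, h12, h1H, h2H⟩ := h
  obtain ⟨hU', h12', h1H', h2H'⟩ := hM
  rw [← disjoint_edgeSet, ← hU, ← hU'] at hKM
  simp only [EdgePartition3, edgeSet_sup, ← hU, ← hU']
  simp only [Set.disjoint_left, Set.mem_union] at *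
  refine ⟨?_, ?_, ?_, ?_⟩ <;> grind

lemma sdiff_sup (h : EdgePartition3 (K \ M) F₁ F₂ H) (hM : EdgePartition3 M M₁ M₂ M₃)
    (hMK : M ≤ K) : EdgePartition3 K (F₁ ⊔ M₁) (F₂ ⊔ M₂) (H ⊔ M₃) := by
  simpa only [sdiff_sup_cancel hMK] using h.sup hM disjoint_sdiff_self_left

end EdgePartition3

lemma edgePartition3_self_bot_bot {V : Type*} (K : SimpleGraph V) : EdgePartition3 K K ⊥ ⊥ := by
  simp [EdgePartition3]

lemma edgePartition3_bot_bot_self {V : Type*} (K : SimpleGraph V) : EdgePartition3 K ⊥ ⊥ K := by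
  simp [EdgePartition3]

lemma edgePartition3_sup_bot {V : Type*} {M₁ M₂ : SimpleGraph V} (h : Disjoint M₁ M₂) :
    EdgePartition3 (M₁ ⊔ M₂) M₁ M₂ ⊥ := by
  simp [EdgePartition3, edgeSet_sup, disjoint_edgeSet.mpr h]

/-- `max 2 ⌈(d - α + 6) / 2⌉`, computed in `ℕ`: where the subtraction truncates, the `max` is `2`
either way (`natCast_forestDegreeBound`). -/
def forestDegreeBound (α d : ℕ) : ℕ := max 2 ((d + 7 - α) / 2)

lemma forestDegreeBound_mono (α : ℕ) {d e : ℕ} (h : d ≤ e) :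
    forestDegreeBound α d ≤ forestDegreeBound α e := by
  unfold forestDegreeBound; omega

lemma natCast_forestDegreeBound (α d : ℕ) :
    (forestDegreeBound α d : ℤ) = max 2 ⌈((d : ℚ) - α + 6) / 2⌉ := by
  have hle : ((d : ℚ) - α + 6) / 2 ≤ ⌈((d : ℚ) - α + 6) / 2⌉ := Int.le_ceil _
  have hlt : (⌈((d : ℚ) - α + 6) / 2⌉ : ℚ) < ((d : ℚ) - α + 6) / 2 + 1 := Int.ceil_lt_add_one _
  have h₁ : (d : ℤ) - α + 6 ≤ 2 * ⌈((d : ℚ) - α + 6) / 2⌉ := by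
    exact_mod_cast (by linarith : ((d : ℚ) - α + 6) ≤ 2 * ⌈((d : ℚ) - α + 6) / 2⌉)
  have h₂ : 2 * ⌈((d : ℚ) - α + 6) / 2⌉ < (d : ℤ) - α + 8 := by
    exact_mod_cast (by linarith : 2 * (⌈((d : ℚ) - α + 6) / 2⌉ : ℚ) < (d : ℚ) - α + 8)
  unfold forestDegreeBound
  omega

structure IsDecomposition {V : Type*} (α : ℕ) (K F₁ F₂ H : SimpleGraph V) : Prop where
  edgePartition : EdgePartition3 K F₁ F₂ H
  isAcyclic₁ : F₁.IsAcyclic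
  isAcyclic₂ : F₂.IsAcyclic
  ncard_neighborSet₁_le :
    ∀ x, (F₁.neighborSet x).ncard ≤ forestDegreeBound α (K.neighborSet x).ncard
  ncard_neighborSet₂_le :
    ∀ x, (F₂.neighborSet x).ncard ≤ forestDegreeBound α (K.neighborSet x).ncard
  ncard_neighborSetH_le : ∀ x, (H.neighborSet x).ncard ≤ α - 5

namespace IsDecomposition

variable {V : Type*} {α : ℕ} {K M F₁ F₂ H : SimpleGraph V}

lemma bot : IsDecomposition α (⊥ : SimpleGraph V) ⊥ ⊥ ⊥ where
  edgePartition := edgePartition3_self_bot_bot ⊥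
  isAcyclic₁ := isAcyclic_bot
  isAcyclic₂ := isAcyclic_bot
  ncard_neighborSet₁_le x := by simp [forestDegreeBound]
  ncard_neighborSet₂_le x := by simp [forestDegreeBound]
  ncard_neighborSetH_le x := by simp

lemma swap (D : IsDecomposition α K F₁ F₂ H) : IsDecomposition α K F₂ F₁ H :=
  ⟨D.1.swap, D.3, D.2, D.5, D.4, D.6⟩

variable [Finite V] {u v : V}

lemma ncard_neighborSet₁_le_of_sdiff (D : IsDecomposition α (K \ M) F₁ F₂ H) (x : V) :
    (F₁.neighborSet x).ncard ≤ forestDegreeBound α (K.neighborSet x).ncard :=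
  (D.ncard_neighborSet₁_le x).trans
    (forestDegreeBound_mono α (ncard_neighborSet_le_of_le sdiff_le x))

lemma ncard_neighborSet₂_le_of_sdiff (D : IsDecomposition α (K \ M) F₁ F₂ H) (x : V) :
    (F₂.neighborSet x).ncard ≤ forestDegreeBound α (K.neighborSet x).ncard :=
  D.swap.ncard_neighborSet₁_le_of_sdiff x

lemma sup_edge₁ (D : IsDecomposition α (K \ edge u v) F₁ F₂ H) (huv : K.Adj u v)
    (hr : ¬F₁.Reachable u v)
    (hu : (F₁.neighborSet u).ncard < forestDegreeBound α (K.neighborSet u).ncard)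
    (hv : (F₁.neighborSet v).ncard < forestDegreeBound α (K.neighborSet v).ncard) :
    IsDecomposition α K (F₁ ⊔ edge u v) F₂ H where
  edgePartition := by
    simpa only [sup_bot_eq] using
      D.edgePartition.sdiff_sup (edgePartition3_self_bot_bot _) (K.edge_le_iff.mpr (.inr huv))
  isAcyclic₁ := D.isAcyclic₁.sup_edge_of_not_reachable hr
  isAcyclic₂ := D.isAcyclic₂
  ncard_neighborSet₁_le := ncard_neighborSet_sup_edge_le D.ncard_neighborSet₁_le_of_sdiff hu hv
  ncard_neighborSet₂_le := D.ncard_neighborSet₂_le_of_sdiff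
  ncard_neighborSetH_le := D.ncard_neighborSetH_le

lemma sup_edgeH (D : IsDecomposition α (K \ edge u v) F₁ F₂ H) (huv : K.Adj u v)
    (hu : (H.neighborSet u).ncard < α - 5) (hv : (H.neighborSet v).ncard < α - 5) :
    IsDecomposition α K F₁ F₂ (H ⊔ edge u v) where
  edgePartition := by
    simpa only [sup_bot_eq] using
      D.edgePartition.sdiff_sup (edgePartition3_bot_bot_self _) (K.edge_le_iff.mpr (.inr huv))
  isAcyclic₁ := D.isAcyclic₁
  isAcyclic₂ := D.isAcyclic₂
  ncard_neighborSet₁_le := D.ncard_neighborSet₁_le_of_sdiff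
  ncard_neighborSet₂_le := D.ncard_neighborSet₂_le_of_sdiff
  ncard_neighborSetH_le := ncard_neighborSet_sup_edge_le D.ncard_neighborSetH_le hu hv

theorem exists_of_sdiff_edge (D : IsDecomposition α (K \ edge u v) F₁ F₂ H) (huv : K.Adj u v)
    (h : (K.neighborSet u).ncard + (K.neighborSet v).ncard ≤ α ∨ (K.neighborSet v).ncard = 1) :
    ∃ F₁' F₂' H' : SimpleGraph V, IsDecomposition α K F₁' F₂' H' := by
  by_cases h₁ : ¬F₁.Reachable u v ∧
      (F₁.neighborSet u).ncard < forestDegreeBound α (K.neighborSet u).ncard ∧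
      (F₁.neighborSet v).ncard < forestDegreeBound α (K.neighborSet v).ncard
  · exact ⟨_, _, _, D.sup_edge₁ huv h₁.1 h₁.2.1 h₁.2.2⟩
  by_cases h₂ : ¬F₂.Reachable u v ∧
      (F₂.neighborSet u).ncard < forestDegreeBound α (K.neighborSet u).ncard ∧
      (F₂.neighborSet v).ncard < forestDegreeBound α (K.neighborSet v).ncard
  · exact ⟨_, _, _, (D.swap.sup_edge₁ huv h₂.1 h₂.2.1 h₂.2.2).swap⟩
  by_cases h₃ : (H.neighborSet u).ncard < α - 5 ∧ (H.neighborSet v).ncard < α - 5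
  · exact ⟨_, _, _, D.sup_edgeH huv h₃.1 h₃.2⟩
  exfalso
  have blocked : ∀ F : SimpleGraph V, ¬(¬F.Reachable u v ∧
      (F.neighborSet u).ncard < forestDegreeBound α (K.neighborSet u).ncard ∧
      (F.neighborSet v).ncard < forestDegreeBound α (K.neighborSet v).ncard) →
      (1 ≤ (F.neighborSet u).ncard ∧ 1 ≤ (F.neighborSet v).ncard) ∨
      ¬((F.neighborSet u).ncard < forestDegreeBound α (K.neighborSet u).ncard ∧
        (F.neighborSet v).ncard < forestDegreeBound α (K.neighborSet v).ncard) := by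
    intro F hF
    by_cases hr : F.Reachable u v
    · exact .inl ⟨hr.one_le_ncard_neighborSet huv.ne, hr.symm.one_le_ncard_neighborSet huv.ne'⟩
    · exact .inr fun h => hF ⟨hr, h⟩
  have hF₁ := blocked F₁ h₁
  have hF₂ := blocked F₂ h₂
  have hu := D.edgePartition.ncard_neighborSet u
  have hv := D.edgePartition.ncard_neighborSet v
  rw [← Nat.add_right_cancel_iff, ncard_neighborSet_sdiff_edge_add_one huv] at hu
  rw [← Nat.add_right_cancel_iff, edge_comm, ncard_neighborSet_sdiff_edge_add_one huv.symm] at hv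
  have hHu := D.ncard_neighborSetH_le u
  have hHv := D.ncard_neighborSetH_le v
  unfold forestDegreeBound at *
  omega

end IsDecomposition

section AlternatingCycle

variable {V : Type*} {n : ℕ}

def parity (n : ℕ) : ZMod (2 * n) →+* ZMod 2 := ZMod.castHom (dvd_mul_right 2 n) (ZMod 2)

lemma parity_eq_zero_or_one (i : ZMod (2 * n)) : parity n i = 0 ∨ parity n i = 1 := by
  generalize parity n i = a
  revert a; decide

lemma parity_add_one (i : ZMod (2 * n)) : parity n (i + 1) = parity n i + 1 := by
  rw [map_add, map_one]

lemma parity_sub_one (i : ZMod (2 * n)) : parity n (i - 1) = parity n i + 1 := by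
  rw [map_sub, map_one]
  generalize parity n i = a
  revert a; decide

lemma parity_ne_parity_add_one (i : ZMod (2 * n)) : parity n i ≠ parity n (i + 1) := by
  rw [parity_add_one]
  generalize parity n i = a
  revert a; decide

def parityEdges (c : ZMod (2 * n) → V) (b : ZMod 2) : SimpleGraph V :=
  SimpleGraph.fromRel fun x y => ∃ i, parity n i = b ∧ x = c i ∧ y = c (i + 1)

variable {K F : SimpleGraph V} {c : ZMod (2 * n) → V}

lemma neighborSet_parityEdges (hc : c.Injective) (b : ZMod 2) (i : ZMod (2 * n)) :
    (parityEdges c b).neighborSet (c i) = {if parity n i = b then c (i + 1) else c (i - 1)} := by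
  have hne : ∀ j, c j ≠ c (j + 1) := fun j h =>
    parity_ne_parity_add_one j (congrArg (parity n) (hc h))
  ext y
  simp only [mem_neighborSet, parityEdges, fromRel_adj, Set.mem_singleton_iff]
  constructor
  · rintro ⟨-, ⟨k, rfl, hik, rfl⟩ | ⟨k, rfl, rfl, hik⟩⟩
    · obtain rfl := hc hik
      simp
    · obtain rfl := hc hik
      rw [if_neg (parity_ne_parity_add_one k).symm, add_sub_cancel_right]
  · split_ifs with hi
    · rintro rfl
      exact ⟨hne i, .inl ⟨i, hi, rfl, rfl⟩⟩
    · rintro rfl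
      refine ⟨(sub_add_cancel i 1 ▸ hne (i - 1)).symm,
        .inr ⟨i - 1, ?_, rfl, by rw [sub_add_cancel]⟩⟩
      rw [parity_sub_one]
      generalize parity n i = a at hi
      revert a b; decide

lemma neighborSet_parityEdges_eq_empty {x : V} (hx : x ∉ Set.range c) (b : ZMod 2) :
    (parityEdges c b).neighborSet x = ∅ := by
  ext y
  simp only [mem_neighborSet, parityEdges, fromRel_adj, Set.mem_empty_iff_false, iff_false]
  rintro ⟨-, ⟨k, -, rfl, -⟩ | ⟨k, -, -, rfl⟩⟩
  exacts [hx ⟨k, rfl⟩, hx ⟨k + 1, rfl⟩]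

lemma parityEdges_le (hadj : ∀ i, K.Adj (c i) (c (i + 1))) (b : ZMod 2) : parityEdges c b ≤ K := by
  rintro x y ⟨-, ⟨k, -, rfl, rfl⟩ | ⟨k, -, rfl, rfl⟩⟩
  exacts [hadj k, (hadj k).symm]

lemma neighborSet_parityEdges_sup (hc : c.Injective) (i : ZMod (2 * n)) :
    (parityEdges c 0 ⊔ parityEdges c 1).neighborSet (c i) = {c (i + 1), c (i - 1)} := by
  rw [neighborSet_sup, neighborSet_parityEdges hc, neighborSet_parityEdges hc]
  rcases parity_eq_zero_or_one i with h | h <;> simp [h, Set.pair_comm]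

lemma disjoint_parityEdges (hc : c.Injective) (h2 : (2 : ZMod (2 * n)) ≠ 0) :
    Disjoint (parityEdges c 0) (parityEdges c 1) := by
  rw [← disjoint_neighborSet]
  intro x
  by_cases hx : x ∈ Set.range c
  · obtain ⟨i, rfl⟩ := hx
    have hne : c (i + 1) ≠ c (i - 1) := fun h => h2 (by linear_combination hc h)
    rw [neighborSet_parityEdges hc, neighborSet_parityEdges hc, Set.disjoint_singleton]
    rcases parity_eq_zero_or_one i with h | h <;> simp [h, hne, hne.symm]
  · simp [neighborSet_parityEdges_eq_empty hx]

/-- A 2-alternating cycle of `K`, indexed by `ZMod (2 * n)` so that the neighbours `c (i + 1)`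
and `c (i - 1)` along the cycle need no case distinction. -/
structure IsTwoAlternatingCycle (K : SimpleGraph V) (c : ZMod (2 * n) → V) : Prop where
  injective : c.Injective
  two_ne_zero : (2 : ZMod (2 * n)) ≠ 0
  adj : ∀ i, K.Adj (c i) (c (i + 1))
  ncard_neighborSet : ∀ i, parity n i = 0 → (K.neighborSet (c i)).ncard = 2

namespace IsTwoAlternatingCycle

variable {α : ℕ}

lemma parityEdges_sup_le (hC : IsTwoAlternatingCycle K c) :
    parityEdges c 0 ⊔ parityEdges c 1 ≤ K :=
  sup_le (parityEdges_le hC.adj 0) (parityEdges_le hC.adj 1)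

lemma parityEdges_sup_ne_bot (hC : IsTwoAlternatingCycle K c) :
    parityEdges c 0 ⊔ parityEdges c 1 ≠ ⊥ := by
  refine ne_bot_iff_exists_adj.mpr ⟨c 0, c (0 + 1), .inl ?_⟩
  change c (0 + 1) ∈ (parityEdges c 0).neighborSet (c 0)
  rw [neighborSet_parityEdges hC.injective, if_pos (map_zero _)]
  rfl

lemma ncard_neighborSet_parityEdges_sup (hC : IsTwoAlternatingCycle K c) (i : ZMod (2 * n)) :
    ((parityEdges c 0 ⊔ parityEdges c 1).neighborSet (c i)).ncard = 2 := by
  rw [neighborSet_parityEdges_sup hC.injective, Set.ncard_pair]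
  exact fun h => hC.two_ne_zero (by linear_combination hC.injective h)

lemma ncard_neighborSet_eq_two_or (hC : IsTwoAlternatingCycle K c)
    (hsum : ∀ x y, K.Adj x y → α < (K.neighborSet x).ncard + (K.neighborSet y).ncard)
    (i : ZMod (2 * n)) :
    (K.neighborSet (c i)).ncard = 2 ∨ α ≤ (K.neighborSet (c i)).ncard + 1 := by
  rcases parity_eq_zero_or_one i with h | h
  · exact .inl (hC.ncard_neighborSet i h)
  · have h' := hC.ncard_neighborSet (i + 1) (by rw [parity_add_one, h]; decide)
    have := hsum _ _ (hC.adj i)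
    omega

variable [Finite V]

lemma neighborSet_sdiff_eq_empty (hC : IsTwoAlternatingCycle K c) {i : ZMod (2 * n)}
    (hi : parity n i = 0) : (K \ (parityEdges c 0 ⊔ parityEdges c 1)).neighborSet (c i) = ∅ := by
  rw [← Set.ncard_eq_zero, ncard_neighborSet_sdiff hC.parityEdges_sup_le,
    hC.ncard_neighborSet i hi, hC.ncard_neighborSet_parityEdges_sup]

lemma isAcyclic_sup_parityEdges (hC : IsTwoAlternatingCycle K c) (hF : F.IsAcyclic)
    (hFK : F ≤ K \ (parityEdges c 0 ⊔ parityEdges c 1)) (b : ZMod 2) :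
    (F ⊔ parityEdges c b).IsAcyclic := by
  have pendant : ∀ i, parity n i = 0 →
      ((F ⊔ parityEdges c b).neighborSet (c i)).Subsingleton := by
    intro i hi
    have hFi : F.neighborSet (c i) = ∅ :=
      Set.subset_empty_iff.mp fun y hy => hC.neighborSet_sdiff_eq_empty hi ▸ hFK hy
    rw [neighborSet_sup, hFi, Set.empty_union, neighborSet_parityEdges hC.injective]
    exact Set.subsingleton_singleton
  refine hF.sup_of_forall_adj_subsingleton ?_
  rintro x y ⟨-, ⟨k, -, rfl, rfl⟩ | ⟨k, -, rfl, rfl⟩⟩ <;>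
  rcases parity_eq_zero_or_one k with h | h
  · exact .inl (pendant k h)
  · exact .inr (pendant (k + 1) (by rw [parity_add_one, h]; decide))
  · exact .inr (pendant k h)
  · exact .inl (pendant (k + 1) (by rw [parity_add_one, h]; decide))

lemma ncard_neighborSet_sup_parityEdges_le (hC : IsTwoAlternatingCycle K c)
    (hsum : ∀ x y, K.Adj x y → α < (K.neighborSet x).ncard + (K.neighborSet y).ncard)
    (hFK : F ≤ K \ (parityEdges c 0 ⊔ parityEdges c 1))
    (hF : ∀ x, (F.neighborSet x).ncard ≤
      forestDegreeBound α ((K \ (parityEdges c 0 ⊔ parityEdges c 1)).neighborSet x).ncard)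
    (b : ZMod 2) (x : V) :
    ((F ⊔ parityEdges c b).neighborSet x).ncard ≤ forestDegreeBound α (K.neighborSet x).ncard := by
  have hsup := ncard_neighborSet_sup_le (F := F) (M := parityEdges c b) x
  have hFle := ncard_neighborSet_le_of_le hFK x
  have hFx := hF x
  rw [ncard_neighborSet_sdiff hC.parityEdges_sup_le] at hFle hFx
  by_cases hx : x ∈ Set.range c
  · obtain ⟨i, rfl⟩ := hx
    rw [neighborSet_parityEdges hC.injective, Set.ncard_singleton] at hsup
    rw [hC.ncard_neighborSet_parityEdges_sup] at hFle hFx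
    have := hC.ncard_neighborSet_eq_two_or hsum i
    unfold forestDegreeBound at *
    omega
  · rw [neighborSet_parityEdges_eq_empty hx, Set.ncard_empty] at hsup
    rw [neighborSet_sup, neighborSet_parityEdges_eq_empty hx, neighborSet_parityEdges_eq_empty hx,
      Set.union_empty, Set.ncard_empty, Nat.sub_zero] at hFx
    omega

end IsTwoAlternatingCycle

lemma IsDecomposition.sup_parityEdges [Finite V] {α : ℕ} {F₁ F₂ H : SimpleGraph V}
    (D : IsDecomposition α (K \ (parityEdges c 0 ⊔ parityEdges c 1)) F₁ F₂ H)
    (hC : IsTwoAlternatingCycle K c)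
    (hsum : ∀ x y, K.Adj x y → α < (K.neighborSet x).ncard + (K.neighborSet y).ncard) :
    IsDecomposition α K (F₁ ⊔ parityEdges c 0) (F₂ ⊔ parityEdges c 1) H where
  edgePartition := by
    simpa only [sup_bot_eq] using D.edgePartition.sdiff_sup
      (edgePartition3_sup_bot (disjoint_parityEdges hC.injective hC.two_ne_zero))
      hC.parityEdges_sup_le
  isAcyclic₁ := hC.isAcyclic_sup_parityEdges D.isAcyclic₁ D.edgePartition.le₁ 0
  isAcyclic₂ := hC.isAcyclic_sup_parityEdges D.isAcyclic₂ D.edgePartition.le₂ 1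
  ncard_neighborSet₁_le :=
    hC.ncard_neighborSet_sup_parityEdges_le hsum D.edgePartition.le₁ D.ncard_neighborSet₁_le 0
  ncard_neighborSet₂_le :=
    hC.ncard_neighborSet_sup_parityEdges_le hsum D.edgePartition.le₂ D.ncard_neighborSet₂_le 1
  ncard_neighborSetH_le := D.ncard_neighborSetH_le

lemma SubgraphHasTwoAlternatingCycle.exists_isTwoAlternatingCycle {G : SimpleGraph V}
    {G' : G.Subgraph} (h : SubgraphHasTwoAlternatingCycle G') :
    ∃ (n : ℕ) (c : ZMod (2 * n) → V), IsTwoAlternatingCycle G'.spanningCoe c := by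
  obtain ⟨n, f, hn, hinj, hadj, hdeg⟩ := h
  have : NeZero (2 * n) := ⟨by omega⟩
  refine ⟨n, fun i => f i.val, ⟨fun i j hij => ?_, fun h2 => ?_, fun i => ?_, fun i hi => ?_⟩⟩
  · exact ZMod.val_injective _ (hinj _ (ZMod.val_lt i) _ (ZMod.val_lt j) hij)
  · have : 2 * n ∣ 2 := (ZMod.natCast_eq_zero_iff 2 (2 * n)).mp (by exact_mod_cast h2)
    have := Nat.le_of_dvd two_pos this
    omega
  · have := hadj i.val (ZMod.val_lt i)
    rwa [ZMod.val_add, ZMod.val_one_eq_one_mod, Nat.add_mod_mod]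
  · refine hdeg i.val (ZMod.val_lt i) ?_
    rw [parity, ZMod.castHom_apply, ZMod.cast_eq_val, ZMod.natCast_eq_zero_iff_even] at hi
    exact Nat.even_iff.mp hi

end AlternatingCycle

/-- On the support of `K`, so that alternative (i) of the hypothesis yields a vertex of degree
exactly one. -/
def supportSubgraph {V : Type*} {G K : SimpleGraph V} (h : K ≤ G) : G.Subgraph where
  verts := K.support
  Adj := K.Adj
  adj_sub hadj := h hadj
  edge_vert hadj := ⟨_, hadj⟩
  symm := K.symm

theorem exists_isDecomposition {V : Type*} [Finite V] {α : ℕ} {G : SimpleGraph V}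
    (hG : ∀ G' : G.Subgraph, G'.verts.Nonempty →
      (∃ v ∈ G'.verts, (G'.neighborSet v).ncard ≤ 1) ∨
      (∃ u v, G'.Adj u v ∧ (G'.neighborSet u).ncard + (G'.neighborSet v).ncard ≤ α) ∨
      SubgraphHasTwoAlternatingCycle G')
    (K : SimpleGraph V) (hKG : K ≤ G) : ∃ F₁ F₂ H, IsDecomposition α K F₁ F₂ H := by
  induction K using WellFoundedLT.induction with
  | _ K ih =>
  rcases eq_or_ne K ⊥ with rfl | hK
  · exact ⟨⊥, ⊥, ⊥, .bot⟩
  have reduce : ∀ M ≤ K, M ≠ ⊥ → ∃ F₁ F₂ H, IsDecomposition α (K \ M) F₁ F₂ H :=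
    fun M hMK hM => ih _ (sdiff_lt hMK hM) (sdiff_le.trans hKG)
  have reduce_edge : ∀ u v, K.Adj u v → ∃ F₁ F₂ H, IsDecomposition α (K \ edge u v) F₁ F₂ H :=
    fun u v huv => reduce _ (K.edge_le_iff.mpr (.inr huv))
      (ne_bot_iff_exists_adj.mpr ⟨u, v, (edge_adj _ _ _ _).mpr ⟨.inl ⟨rfl, rfl⟩, huv.ne⟩⟩)
  by_cases hsum : ∃ u v, K.Adj u v ∧ (K.neighborSet u).ncard + (K.neighborSet v).ncard ≤ α
  · obtain ⟨u, v, huv, h⟩ := hsum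
    obtain ⟨F₁, F₂, H, D⟩ := reduce_edge u v huv
    exact D.exists_of_sdiff_edge huv (.inl h)
  push Not at hsum
  obtain ⟨u, v, huv⟩ := ne_bot_iff_exists_adj.mp hK
  rcases hG (supportSubgraph hKG) ⟨u, v, huv⟩ with ⟨w, ⟨x, hwx⟩, hw⟩ | ⟨x, y, hxy, h⟩ | hcyc
  · obtain ⟨F₁, F₂, H, D⟩ := reduce_edge x w hwx.symm
    exact D.exists_of_sdiff_edge hwx.symm (.inr (le_antisymm hw ((Set.ncard_pos).mpr ⟨x, hwx⟩)))
  · exact absurd h (hsum x y hxy).not_ge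
  · obtain ⟨n, c, hC⟩ := hcyc.exists_isTwoAlternatingCycle
    obtain ⟨F₁, F₂, H, D⟩ := reduce _ hC.parityEdges_sup_le hC.parityEdges_sup_ne_bot
    exact ⟨_, _, _, D.sup_parityEdges hC hsum⟩

theorem statement1_general {V : Type*} [Fintype V] (α : ℕ) (G : SimpleGraph V)
    [DecidableRel G.Adj] (Δ : ℕ) (hΔ : Δ = G.maxDegree)
    (hG : ∀ G' : G.Subgraph, G'.verts.Nonempty →
      (∃ v ∈ G'.verts, (G'.neighborSet v).ncard ≤ 1) ∨
      (∃ u v, G'.Adj u v ∧ (G'.neighborSet u).ncard + (G'.neighborSet v).ncard ≤ α) ∨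
      SubgraphHasTwoAlternatingCycle G') :
    ∃ F₁ F₂ H : SimpleGraph V,
      EdgePartition3 G F₁ F₂ H ∧
      F₁.IsAcyclic ∧ F₂.IsAcyclic ∧
      (∀ v, ((F₁.neighborSet v).ncard : ℤ) ≤ max 2 ⌈((Δ : ℚ) - α + 6) / 2⌉) ∧
      (∀ v, ((F₂.neighborSet v).ncard : ℤ) ≤ max 2 ⌈((Δ : ℚ) - α + 6) / 2⌉) ∧
      (∀ v, (H.neighborSet v).ncard ≤ α - 5) := by
  obtain ⟨F₁, F₂, H, D⟩ := exists_isDecomposition hG G le_rfl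
  have hforest : ∀ F : SimpleGraph V,
      (∀ v, (F.neighborSet v).ncard ≤ forestDegreeBound α (G.neighborSet v).ncard) →
      ∀ v, ((F.neighborSet v).ncard : ℤ) ≤ max 2 ⌈((Δ : ℚ) - α + 6) / 2⌉ := by
    intro F hF v
    have hdeg : (G.neighborSet v).ncard ≤ Δ := by
      rw [hΔ, ← Nat.card_coe_set_eq, Nat.card_eq_fintype_card, card_neighborSet_eq_degree]
      exact G.degree_le_maxDegree v
    rw [← natCast_forestDegreeBound]
    exact_mod_cast (hF v).trans (forestDegreeBound_mono α hdeg)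
  exact ⟨F₁, F₂, H, D.edgePartition, D.isAcyclic₁, D.isAcyclic₂,
    hforest F₁ D.ncard_neighborSet₁_le, hforest F₂ D.ncard_neighborSet₂_le,
    D.ncard_neighborSetH_le⟩

/-- Let `α ≥ 5` and let `G` be a finite simple graph with maximum
degree `Δ` such that every (nonempty) subgraph `G'` of `G` has a vertex of degree at
most 1, or contains an edge `uv` with `d_{G'}(u) + d_{G'}(v) ≤ α`, or contains a
2-alternating cycle. Then `E(G)` can be partitioned into two forests `F₁`, `F₂` and a
subgraph `H` with `Δ(Fᵢ) ≤ max {2, ⌈(Δ - α + 6)/2⌉}` and `Δ(H) ≤ α - 5`. -/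
theorem statement1 {V : Type*} [Fintype V] (α : ℕ) (hα : 5 ≤ α) (G : SimpleGraph V)
    [DecidableRel G.Adj] (Δ : ℕ) (hΔ : Δ = G.maxDegree)
    (hG : ∀ G' : G.Subgraph, G'.verts.Nonempty →
      (∃ v ∈ G'.verts, (G'.neighborSet v).ncard ≤ 1) ∨
      (∃ u v, G'.Adj u v ∧ (G'.neighborSet u).ncard + (G'.neighborSet v).ncard ≤ α) ∨
      SubgraphHasTwoAlternatingCycle G') :
    ∃ F₁ F₂ H : SimpleGraph V,
      EdgePartition3 G F₁ F₂ H ∧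
      F₁.IsAcyclic ∧ F₂.IsAcyclic ∧
      (∀ v, ((F₁.neighborSet v).ncard : ℤ) ≤ max 2 ⌈((Δ : ℚ) - α + 6) / 2⌉) ∧
      (∀ v, ((F₂.neighborSet v).ncard : ℤ) ≤ max 2 ⌈((Δ : ℚ) - α + 6) / 2⌉) ∧
      (∀ v, (H.neighborSet v).ncard ≤ α - 5) :=
  statement1_general α G Δ hΔ hG
end

section
/- Let α ≥ 5 be an integer, let G be a finite simple graph, and let C = v₀v₁⋯v₂ₙ₋₁v₀ (n ≥ 2) be a cycle in G with d_G(v₀) = d_G(v₂) = ⋯ = d_G(v₂ₙ₋₂) = 2 and d_G(v_i) ≥ α − 1 for every odd index i. Suppose the graph G' = G − E(C), obtained by deleting all edges of C, admits an edge partition into spanning subgraphs F₁', F₂', H' such that F₁' and F₂' are forests with d_{F_i'}(w) ≤ max{2, ⌈(d_{G'}(w) − α + 6)/2⌉} for every vertex w and each i ∈ {1,2}, and H' has maximum degree at most α − 5. Then G admits an edge partition into spanning subgraphs F₁, F₂, H such that F₁ and F₂ are forests with d_{F_i}(w) ≤ max{2, ⌈(d_G(w) − α + 6)/2⌉} for every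 vertex w and each i ∈ {1,2}, and H has maximum degree at most α − 5; indeed one may take H = H', F₁ = F₁' together with the edges v₁v₂, v₃v₄, …, v₂ₙ₋₁v₀, and F₂ = F₂' together with the edges v₀v₁, v₂v₃, …, v₂ₙ₋₂v₂ₙ₋₁. -/
open SimpleGraph

def degreeBound (α d : ℕ) : ℤ := max 2 ⌈((d : ℚ) - α + 6) / 2⌉

theorem degreeBound_mono (α : ℕ) : Monotone (degreeBound α) := fun d e hde ↦ by
  unfold degreeBound
  gcongr

theorem two_le_degreeBound (α d : ℕ) : 2 ≤ degreeBound α d := le_max_left _ _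

theorem degreeBound_add_one_le {α d e : ℕ} (hed : e + 2 ≤ d) (hαd : α ≤ d + 1) :
    degreeBound α e + 1 ≤ degreeBound α d := by
  have hed' : (e : ℚ) + 2 ≤ d := by exact_mod_cast hed
  have hαd' : (α : ℚ) ≤ d + 1 := by exact_mod_cast hαd
  have h3 : 2 < ⌈((d : ℚ) - α + 6) / 2⌉ := Int.lt_ceil.mpr (by push_cast; linarith)
  have hstep : ⌈((e : ℚ) - α + 6) / 2⌉ + 1 ≤ ⌈((d : ℚ) - α + 6) / 2⌉ := by
    rw [← Int.ceil_add_one]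
    exact Int.ceil_mono (by linarith)
  unfold degreeBound
  omega

namespace Nat

theorem exists_add_one_mod_eq {m i : ℕ} (hi : i < m) : ∃ j < m, (j + 1) % m = i := by
  refine ⟨(i + m - 1) % m, Nat.mod_lt _ (by omega), ?_⟩
  rw [Nat.mod_add_mod, Nat.sub_add_cancel (by omega), Nat.add_mod_right, Nat.mod_eq_of_lt hi]

theorem add_one_mod_injOn {m i j : ℕ} (hi : i < m) (hj : j < m)
    (h : (i + 1) % m = (j + 1) % m) : i = j :=
  (Nat.ModEq.add_right_cancel' 1 h).eq_of_lt_of_lt hi hj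

theorem add_one_mod_add_one_mod_ne {m i : ℕ} (hm : 3 ≤ m) (hi : i < m) :
    ((i + 1) % m + 1) % m ≠ i := by
  rw [Nat.mod_add_mod]
  intro h
  rcases lt_or_ge (i + 1 + 1) m with hlt | hge
  · rw [Nat.mod_eq_of_lt hlt] at h
    omega
  · rw [Nat.mod_eq_sub_mod hge, Nat.mod_eq_of_lt (by omega)] at h
    omega

end Nat

namespace SimpleGraph

variable {V : Type*}

theorem Walk.IsCycle.not_subsingleton_neighborSet {G : SimpleGraph V} {u v : V}
    {c : G.Walk u u} (hc : c.IsCycle) (hv : v ∈ c.support) :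
    ¬ (G.neighborSet v).Subsingleton := by
  have hnt := (Set.one_lt_ncard_iff_nontrivial_and_finite.mp
    (hc.ncard_neighborSet_toSubgraph_eq_two hv ▸ one_lt_two)).1
  exact (hnt.mono (c.toSubgraph.neighborSet_subset v)).not_subsingleton

theorem IsAcyclic.sup_of_forall_exists_subsingleton {F M : SimpleGraph V} (hF : F.IsAcyclic)
    (hM : ∀ e ∈ M.edgeSet, ∃ v ∈ e, ((F ⊔ M).neighborSet v).Subsingleton) :
    (F ⊔ M).IsAcyclic := by
  intro u c hc
  by_cases hcF : ∀ e ∈ c.edges, e ∈ F.edgeSet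
  · exact hF (c.transfer F hcF) (hc.transfer hcF)
  push Not at hcF
  obtain ⟨e, hec, heF⟩ := hcF
  have heM : e ∈ M.edgeSet := ((edgeSet_sup F M ▸ c.edges_subset_edgeSet hec)).resolve_left heF
  obtain ⟨v, hve, hv⟩ := hM e heM
  exact hc.not_subsingleton_neighborSet (c.mem_support_of_mem_edges hec hve) hv

theorem neighborSet_fromEdgeSet_eq_empty {s : Set (Sym2 V)} {v : V} (hv : ∀ e ∈ s, v ∉ e) :
    (fromEdgeSet s).neighborSet v = ∅ :=
  Set.eq_empty_of_forall_notMem fun _ hw ↦ hv _ hw.1 (Sym2.mem_mk_left _ _)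

theorem EdgePartition3.left_le {G F₁ F₂ H : SimpleGraph V} (h : EdgePartition3 G F₁ F₂ H) :
    F₁ ≤ G :=
  edgeSet_subset_edgeSet.mp (h.1 ▸ Set.subset_union_left.trans Set.subset_union_left)

theorem EdgePartition3.middle_le {G F₁ F₂ H : SimpleGraph V} (h : EdgePartition3 G F₁ F₂ H) :
    F₂ ≤ G :=
  edgeSet_subset_edgeSet.mp (h.1 ▸ Set.subset_union_right.trans Set.subset_union_left)

theorem edgeSet_fromEdgeSet_of_subset {G : SimpleGraph V} {s : Set (Sym2 V)}
    (hs : s ⊆ G.edgeSet) : (fromEdgeSet s).edgeSet = s := by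
  rw [edgeSet_fromEdgeSet, sdiff_eq_left]
  exact Set.disjoint_left.mpr fun e he ↦ G.not_isDiag_of_mem_edgeSet (hs he)

theorem EdgePartition3.sup_fromEdgeSet {G F₁ F₂ H : SimpleGraph V} {s₁ s₂ : Set (Sym2 V)}
    (h : EdgePartition3 (G.deleteEdges (s₁ ∪ s₂)) F₁ F₂ H) (hs : s₁ ∪ s₂ ⊆ G.edgeSet)
    (hs₁₂ : Disjoint s₁ s₂) :
    EdgePartition3 G (F₁ ⊔ fromEdgeSet s₁) (F₂ ⊔ fromEdgeSet s₂) H := by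
  obtain ⟨hunion, h₁₂, h₁H, h₂H⟩ := h
  rw [edgeSet_deleteEdges] at hunion
  have hdisj : Disjoint (F₁.edgeSet ∪ F₂.edgeSet ∪ H.edgeSet) (s₁ ∪ s₂) :=
    hunion ▸ Set.disjoint_sdiff_left
  obtain ⟨⟨⟨-, hF₂s₁⟩, hHs₁⟩, ⟨⟨hF₁s₂, -⟩, hHs₂⟩⟩ := by
    simpa only [Set.disjoint_union_left, Set.disjoint_union_right] using hdisj
  simp only [EdgePartition3, edgeSet_sup,
    edgeSet_fromEdgeSet_of_subset (Set.subset_union_left.trans hs),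
    edgeSet_fromEdgeSet_of_subset (Set.subset_union_right.trans hs),
    Set.disjoint_union_left, Set.disjoint_union_right]
  refine ⟨?_, ⟨⟨h₁₂, hF₂s₁.symm⟩, hF₁s₂, hs₁₂⟩, ⟨h₁H, hHs₁.symm⟩, ⟨h₂H, hHs₂.symm⟩⟩
  rw [← Set.sdiff_union_of_subset hs, ← hunion]
  ext e
  simp only [Set.mem_union]
  tauto

variable {G : SimpleGraph V} {m : ℕ} {f : ℕ → V}

def cycleEdgeSet (f : ℕ → V) (m : ℕ) : Set (Sym2 V) :=
  {e | ∃ i < m, e = s(f i, f ((i + 1) % m))}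

def alternatingEdgeSet (f : ℕ → V) (m r : ℕ) : Set (Sym2 V) :=
  {e | ∃ i < m, i % 2 = r ∧ e = s(f i, f ((i + 1) % m))}

theorem alternatingEdgeSet_subset_cycleEdgeSet (f : ℕ → V) (m r : ℕ) :
    alternatingEdgeSet f m r ⊆ cycleEdgeSet f m := by
  rintro e ⟨i, hi, -, rfl⟩
  exact ⟨i, hi, rfl⟩

theorem cycleEdgeSet_eq_union (f : ℕ → V) (m : ℕ) :
    cycleEdgeSet f m = alternatingEdgeSet f m 1 ∪ alternatingEdgeSet f m 0 := by
  refine subset_antisymm ?_ (Set.union_subset (alternatingEdgeSet_subset_cycleEdgeSet f m 1)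
    (alternatingEdgeSet_subset_cycleEdgeSet f m 0))
  rintro e ⟨i, hi, rfl⟩
  rcases Nat.mod_two_eq_zero_or_one i with h | h
  exacts [Or.inr ⟨i, hi, h, rfl⟩, Or.inl ⟨i, hi, h, rfl⟩]

theorem cycleEdgeSet_subset_edgeSet (hcyc : ∀ i < m, G.Adj (f i) (f ((i + 1) % m))) :
    cycleEdgeSet f m ⊆ G.edgeSet := by
  rintro e ⟨i, hi, rfl⟩
  exact hcyc i hi

theorem notMem_of_mem_cycleEdgeSet {v : V} (hv : ∀ i < m, f i ≠ v) :
    ∀ e ∈ cycleEdgeSet f m, v ∉ e := by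
  rintro e ⟨i, hi, rfl⟩ hve
  rcases Sym2.mem_iff.mp hve with h | h
  exacts [hv i hi h.symm, hv _ (Nat.mod_lt _ (by omega)) h.symm]

theorem disjoint_alternatingEdgeSet (hinj : Set.InjOn f (Set.Iio m)) (hm3 : 3 ≤ m) :
    Disjoint (alternatingEdgeSet f m 1) (alternatingEdgeSet f m 0) := by
  rw [Set.disjoint_left]
  rintro e ⟨i, hi, hi1, rfl⟩ ⟨j, hj, hj0, he⟩
  rcases Sym2.eq_iff.mp he with ⟨hij, -⟩ | ⟨hij, hji⟩
  · have := hinj hi hj hij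
    omega
  · have hij := hinj hi (Nat.mod_lt _ (by omega) : (j + 1) % m < m) hij
    have hji := hinj (Nat.mod_lt _ (by omega) : (i + 1) % m < m) hj hji
    rw [hij] at hji
    exact Nat.add_one_mod_add_one_mod_ne hm3 hj hji

theorem neighborSet_fromEdgeSet_alternatingEdgeSet_subsingleton
    (hinj : Set.InjOn f (Set.Iio m)) (hm2 : 2 ∣ m) (r : ℕ) (v : V) :
    ((fromEdgeSet (alternatingEdgeSet f m r)).neighborSet v).Subsingleton := by
  have hpar : ∀ i, (i + 1) % m % 2 = (i + 1) % 2 := fun i ↦ Nat.mod_mod_of_dvd _ hm2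
  rintro x ⟨⟨i, hi, hir, hei⟩, -⟩ y ⟨⟨j, hj, hjr, hej⟩, -⟩
  have hsi : (i + 1) % m < m := Nat.mod_lt _ (by omega)
  have hsj : (j + 1) % m < m := Nat.mod_lt _ (by omega)
  rcases Sym2.eq_iff.mp hei with ⟨hvi, rfl⟩ | ⟨hvi, rfl⟩ <;>
    rcases Sym2.eq_iff.mp hej with ⟨hvj, rfl⟩ | ⟨hvj, rfl⟩
  · rw [hinj hi hj (hvi.symm.trans hvj)]
  · have := hinj hi hsj (hvi.symm.trans hvj)
    have := hpar j
    omega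
  · have := hinj hsi hj (hvi.symm.trans hvj)
    have := hpar i
    omega
  · rw [Nat.add_one_mod_injOn hi hj (hinj hsi hsj (hvi.symm.trans hvj))]

theorem exists_even_mem_of_mem_alternatingEdgeSet (hm2 : 2 ∣ m) {r : ℕ} {e : Sym2 V}
    (he : e ∈ alternatingEdgeSet f m r) : ∃ j < m, j % 2 = 0 ∧ f j ∈ e := by
  obtain ⟨i, hi, -, rfl⟩ := he
  rcases Nat.mod_two_eq_zero_or_one i with h | h
  · exact ⟨i, hi, h, Sym2.mem_mk_left _ _⟩
  · refine ⟨(i + 1) % m, Nat.mod_lt _ (by omega), ?_, Sym2.mem_mk_right _ _⟩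
    rw [Nat.mod_mod_of_dvd _ hm2]
    omega

theorem ncard_neighborSet_deleteEdges_cycleEdgeSet_add_two_le [Finite V]
    (hinj : Set.InjOn f (Set.Iio m)) (hm3 : 3 ≤ m)
    (hcyc : ∀ i < m, G.Adj (f i) (f ((i + 1) % m))) {i : ℕ} (hi : i < m) :
    ((G.deleteEdges (cycleEdgeSet f m)).neighborSet (f i)).ncard + 2 ≤
      (G.neighborSet (f i)).ncard := by
  obtain ⟨j, hj, hji⟩ := Nat.exists_add_one_mod_eq hi
  have hne : f j ≠ f ((i + 1) % m) := fun h ↦ Nat.add_one_mod_add_one_mod_ne hm3 hi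
    (by rw [← hinj hj (Nat.mod_lt _ (by omega) : (i + 1) % m < m) h, hji])
  have hpair : {f j, f ((i + 1) % m)} ⊆ G.neighborSet (f i) := by
    rintro x (rfl | rfl)
    · exact (hji ▸ hcyc j hj).symm
    · exact hcyc i hi
  have hsub : (G.deleteEdges (cycleEdgeSet f m)).neighborSet (f i) ⊆
      G.neighborSet (f i) \ {f j, f ((i + 1) % m)} := by
    intro x hx
    obtain ⟨hx, hxC⟩ := deleteEdges_adj.mp hx
    refine ⟨hx, ?_⟩
    rintro (rfl | rfl)
    · exact hxC ⟨j, hj, by rw [hji, Sym2.eq_swap]⟩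
    · exact hxC ⟨i, hi, rfl⟩
  have hcard := Set.ncard_le_ncard hsub
  rw [Set.ncard_sdiff hpair, Set.ncard_pair hne] at hcard
  have := Set.ncard_pair hne ▸ Set.ncard_le_ncard hpair
  omega

theorem neighborSet_eq_empty_of_le_deleteEdges_cycleEdgeSet [Finite V]
    (hinj : Set.InjOn f (Set.Iio m)) (hm3 : 3 ≤ m)
    (hcyc : ∀ i < m, G.Adj (f i) (f ((i + 1) % m))) {F : SimpleGraph V}
    (hFG : F ≤ G.deleteEdges (cycleEdgeSet f m)) {i : ℕ} (hi : i < m)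
    (hdeg : (G.neighborSet (f i)).ncard ≤ 2) : F.neighborSet (f i) = ∅ := by
  have := ncard_neighborSet_deleteEdges_cycleEdgeSet_add_two_le hinj hm3 hcyc hi
  exact Set.subset_eq_empty (neighborSet_mono hFG _) ((Set.ncard_eq_zero).mp (by omega))

theorem IsAcyclic.sup_fromEdgeSet_alternatingEdgeSet [Finite V]
    (hinj : Set.InjOn f (Set.Iio m)) (hm2 : 2 ∣ m) (hm3 : 3 ≤ m)
    (hcyc : ∀ i < m, G.Adj (f i) (f ((i + 1) % m)))
    (heven : ∀ i < m, i % 2 = 0 → (G.neighborSet (f i)).ncard = 2) {F : SimpleGraph V}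
    (hF : F.IsAcyclic) (hFG : F ≤ G.deleteEdges (cycleEdgeSet f m)) (r : ℕ) :
    (F ⊔ fromEdgeSet (alternatingEdgeSet f m r)).IsAcyclic := by
  refine hF.sup_of_forall_exists_subsingleton fun e he ↦ ?_
  rw [edgeSet_fromEdgeSet] at he
  obtain ⟨j, hj, hj0, hje⟩ := exists_even_mem_of_mem_alternatingEdgeSet hm2 he.1
  refine ⟨f j, hje, ?_⟩
  rw [neighborSet_sup, neighborSet_eq_empty_of_le_deleteEdges_cycleEdgeSet hinj hm3 hcyc hFG hj
    (heven j hj hj0).le, Set.empty_union]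
  exact neighborSet_fromEdgeSet_alternatingEdgeSet_subsingleton hinj hm2 r (f j)

theorem ncard_neighborSet_sup_fromEdgeSet_alternatingEdgeSet_le [Finite V] {α : ℕ}
    (hinj : Set.InjOn f (Set.Iio m)) (hm2 : 2 ∣ m) (hm3 : 3 ≤ m)
    (hcyc : ∀ i < m, G.Adj (f i) (f ((i + 1) % m)))
    (heven : ∀ i < m, i % 2 = 0 → (G.neighborSet (f i)).ncard = 2)
    (hodd : ∀ i < m, i % 2 = 1 → α - 1 ≤ (G.neighborSet (f i)).ncard) {F : SimpleGraph V}
    (hFG : F ≤ G.deleteEdges (cycleEdgeSet f m))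
    (hF : ∀ w, ((F.neighborSet w).ncard : ℤ) ≤
      degreeBound α ((G.deleteEdges (cycleEdgeSet f m)).neighborSet w).ncard) (r : ℕ) (w : V) :
    (((F ⊔ fromEdgeSet (alternatingEdgeSet f m r)).neighborSet w).ncard : ℤ) ≤
      degreeBound α (G.neighborSet w).ncard := by
  set M := fromEdgeSet (alternatingEdgeSet f m r)
  have hsup : ((F ⊔ M).neighborSet w).ncard ≤ (F.neighborSet w).ncard + (M.neighborSet w).ncard :=
    Set.ncard_union_le _ _
  have hM : (M.neighborSet w).ncard ≤ 1 := Set.ncard_le_one_iff_subsingleton.mpr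
    (neighborSet_fromEdgeSet_alternatingEdgeSet_subsingleton hinj hm2 r w)
  by_cases hw : ∃ i < m, f i = w
  · obtain ⟨i, hi, rfl⟩ := hw
    rcases Nat.mod_two_eq_zero_or_one i with h | h
    · rw [neighborSet_eq_empty_of_le_deleteEdges_cycleEdgeSet hinj hm3 hcyc hFG hi
        (heven i hi h).le, Set.ncard_empty] at hsup
      have := two_le_degreeBound α (G.neighborSet (f i)).ncard
      omega
    · have hstep := degreeBound_add_one_le (α := α)
        (ncard_neighborSet_deleteEdges_cycleEdgeSet_add_two_le hinj hm3 hcyc hi)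
        (by have := hodd i hi h; omega)
      have := hF (f i)
      omega
  · push Not at hw
    have hM0 : M.neighborSet w = ∅ := neighborSet_fromEdgeSet_eq_empty fun e he ↦
      notMem_of_mem_cycleEdgeSet hw e (alternatingEdgeSet_subset_cycleEdgeSet f m r he)
    rw [hM0, Set.ncard_empty] at hsup
    have := degreeBound_mono α
      (Set.ncard_le_ncard (neighborSet_mono (G.deleteEdges_le (cycleEdgeSet f m)) w))
    have := hF w
    omega

end SimpleGraph

theorem statement7_general {V : Type*} [Fintype V] (α : ℕ)
    (G : SimpleGraph V) (n : ℕ) (hn : 2 ≤ n) (f : ℕ → V)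
    (hinj : ∀ i < 2 * n, ∀ j < 2 * n, f i = f j → i = j)
    (hcyc : ∀ i < 2 * n, G.Adj (f i) (f ((i + 1) % (2 * n))))
    (heven : ∀ i < 2 * n, i % 2 = 0 → (G.neighborSet (f i)).ncard = 2)
    (hodd : ∀ i < 2 * n, i % 2 = 1 → α - 1 ≤ (G.neighborSet (f i)).ncard)
    (G' : SimpleGraph V)
    (hG' : G' = G.deleteEdges {e | ∃ i < 2 * n, e = s(f i, f ((i + 1) % (2 * n)))})
    (F₁' F₂' H' : SimpleGraph V)
    (hpart' : EdgePartition3 G' F₁' F₂' H')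
    (hF₁' : F₁'.IsAcyclic) (hF₂' : F₂'.IsAcyclic)
    (hd₁' : ∀ w, ((F₁'.neighborSet w).ncard : ℤ) ≤
      max 2 ⌈(((G'.neighborSet w).ncard : ℚ) - α + 6) / 2⌉)
    (hd₂' : ∀ w, ((F₂'.neighborSet w).ncard : ℤ) ≤
      max 2 ⌈(((G'.neighborSet w).ncard : ℚ) - α + 6) / 2⌉)
    (hH' : ∀ w, (H'.neighborSet w).ncard ≤ α - 5) :
    ∃ F₁ F₂ : SimpleGraph V,
      F₁ = F₁' ⊔ SimpleGraph.fromEdgeSet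
        {e | ∃ i < 2 * n, i % 2 = 1 ∧ e = s(f i, f ((i + 1) % (2 * n)))} ∧
      F₂ = F₂' ⊔ SimpleGraph.fromEdgeSet
        {e | ∃ i < 2 * n, i % 2 = 0 ∧ e = s(f i, f ((i + 1) % (2 * n)))} ∧
      EdgePartition3 G F₁ F₂ H' ∧
      F₁.IsAcyclic ∧ F₂.IsAcyclic ∧
      (∀ w, ((F₁.neighborSet w).ncard : ℤ) ≤
        max 2 ⌈(((G.neighborSet w).ncard : ℚ) - α + 6) / 2⌉) ∧
      (∀ w, ((F₂.neighborSet w).ncard : ℤ) ≤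
        max 2 ⌈(((G.neighborSet w).ncard : ℚ) - α + 6) / 2⌉) ∧
      (∀ w, (H'.neighborSet w).ncard ≤ α - 5) := by
  change G' = G.deleteEdges (cycleEdgeSet f (2 * n)) at hG'
  subst hG'
  have hm2 : 2 ∣ 2 * n := dvd_mul_right 2 n
  have hm3 : 3 ≤ 2 * n := by omega
  have hF₁G := hpart'.left_le
  have hF₂G := hpart'.middle_le
  refine ⟨_, _, rfl, rfl, ?_,
    hF₁'.sup_fromEdgeSet_alternatingEdgeSet hinj hm2 hm3 hcyc heven hF₁G 1,
    hF₂'.sup_fromEdgeSet_alternatingEdgeSet hinj hm2 hm3 hcyc heven hF₂G 0,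
    ncard_neighborSet_sup_fromEdgeSet_alternatingEdgeSet_le hinj hm2 hm3 hcyc heven hodd hF₁G
      hd₁' 1,
    ncard_neighborSet_sup_fromEdgeSet_alternatingEdgeSet_le hinj hm2 hm3 hcyc heven hodd hF₂G
      hd₂' 0,
    hH'⟩
  rw [cycleEdgeSet_eq_union] at hpart'
  exact hpart'.sup_fromEdgeSet
    ((cycleEdgeSet_eq_union f _).symm ▸ cycleEdgeSet_subset_edgeSet hcyc)
    (disjoint_alternatingEdgeSet hinj hm3)

/-- Let `α ≥ 5`, let `G` be a finite simple graph and let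
`C = v₀v₁⋯v₂ₙ₋₁v₀` (`n ≥ 2`, given by `f i = vᵢ`) be a cycle of `G` whose
even-indexed vertices have degree 2 in `G` and whose odd-indexed vertices have degree
at least `α - 1` in `G`.  If `G' = G - E(C)` has an edge partition into forests
`F₁'`, `F₂'` with `d_{Fᵢ'}(w) ≤ max {2, ⌈(d_{G'}(w) - α + 6)/2⌉}` for all `w`, and a
subgraph `H'` with `Δ(H') ≤ α - 5`, then `G` has such an edge partition; indeed one may
take `H = H'`, `F₁ = F₁'` plus the edges `v₁v₂, v₃v₄, …, v₂ₙ₋₁v₀`, and `F₂ = F₂'`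
plus the edges `v₀v₁, v₂v₃, …, v₂ₙ₋₂v₂ₙ₋₁`. -/
theorem statement7 {V : Type*} [Fintype V] (α : ℕ) (hα : 5 ≤ α)
    (G : SimpleGraph V) (n : ℕ) (hn : 2 ≤ n) (f : ℕ → V)
    (hinj : ∀ i < 2 * n, ∀ j < 2 * n, f i = f j → i = j)
    (hcyc : ∀ i < 2 * n, G.Adj (f i) (f ((i + 1) % (2 * n))))
    (heven : ∀ i < 2 * n, i % 2 = 0 → (G.neighborSet (f i)).ncard = 2)
    (hodd : ∀ i < 2 * n, i % 2 = 1 → α - 1 ≤ (G.neighborSet (f i)).ncard)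
    (G' : SimpleGraph V)
    (hG' : G' = G.deleteEdges {e | ∃ i < 2 * n, e = s(f i, f ((i + 1) % (2 * n)))})
    (F₁' F₂' H' : SimpleGraph V)
    (hpart' : EdgePartition3 G' F₁' F₂' H')
    (hF₁' : F₁'.IsAcyclic) (hF₂' : F₂'.IsAcyclic)
    (hd₁' : ∀ w, ((F₁'.neighborSet w).ncard : ℤ) ≤
      max 2 ⌈(((G'.neighborSet w).ncard : ℚ) - α + 6) / 2⌉)
    (hd₂' : ∀ w, ((F₂'.neighborSet w).ncard : ℤ) ≤
      max 2 ⌈(((G'.neighborSet w).ncard : ℚ) - α + 6) / 2⌉)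
    (hH' : ∀ w, (H'.neighborSet w).ncard ≤ α - 5) :
    ∃ F₁ F₂ : SimpleGraph V,
      F₁ = F₁' ⊔ SimpleGraph.fromEdgeSet
        {e | ∃ i < 2 * n, i % 2 = 1 ∧ e = s(f i, f ((i + 1) % (2 * n)))} ∧
      F₂ = F₂' ⊔ SimpleGraph.fromEdgeSet
        {e | ∃ i < 2 * n, i % 2 = 0 ∧ e = s(f i, f ((i + 1) % (2 * n)))} ∧
      EdgePartition3 G F₁ F₂ H' ∧
      F₁.IsAcyclic ∧ F₂.IsAcyclic ∧
      (∀ w, ((F₁.neighborSet w).ncard : ℤ) ≤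
        max 2 ⌈(((G.neighborSet w).ncard : ℚ) - α + 6) / 2⌉) ∧
      (∀ w, ((F₂.neighborSet w).ncard : ℤ) ≤
        max 2 ⌈(((G.neighborSet w).ncard : ℚ) - α + 6) / 2⌉) ∧
      (∀ w, (H'.neighborSet w).ncard ≤ α - 5) :=
  statement7_general α G n hn f hinj hcyc heven hodd G' hG' F₁' F₂' H' hpart' hF₁' hF₂' hd₁' hd₂'
    hH'
end
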